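/- arXiv:1208.4415 — 4 statements merged into one kernel-verified Lean document; each statement's English description precedes it below -/
import Mathlib

section
/- For any discrete random sequence W^n with distribution π on W^n such that ‖π_{W^n} − ∏_{t=1}^n γ_W‖_TV ≤ ε < 1/4 for a single-letter distribution γ_W on a finite alphabet W, and any random time index T ∈ {1,…,n} independent of W^n, the mutual information between the sampled variable and the time index satisfies I_π(W_T ; T) ≤ 4ε (log|W| + log(1/ε)). -/
/-!
Write `P t` for the law of `W_t` and `P̄ = ∑ t, pT t • P t` for the law of `W_T`. By the chain
rule, `I(W_T; T) = ∑ t, pT t * (H P̄ - H (P t))`. Each `P t` is a pushforward of `π`, hence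
`ε`-close in total variation to the corresponding marginal of `γ^n`, which is `γ`; by convexity
so is `P̄`. A Fannes-type continuity bound, obtained by splitting two distributions along their
minimum and bounding the entropy of the excess of mass `δ` by `δ log |W| + δ log (1/δ)`, gives
`H P - H Q ≤ ε log |W| + 2 ε log (1/ε)` whenever `tvDist P Q ≤ ε ≤ 1/e`. Going through `γ`
bounds each term of the chain rule by twice this.
-/

open Real Finset

/-- Entropy in bits of a (finite-alphabet) probability mass function. -/
noncomputable def H2 {α : Type*} [Fintype α] (P : α → ℝ) : ℝ :=
  -∑ a, P a * Real.logb 2 (P a)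

namespace Real

lemma mul_log_le_mul_log_of_le {x y : ℝ} (hx : 0 ≤ x) (hxy : x ≤ y) :
    x * log x ≤ x * log y := by
  rcases hx.eq_or_lt with rfl | hx
  · simp
  · exact mul_le_mul_of_nonneg_left (log_le_log hx hxy) hx.le

lemma negMulLog_add_le {x y : ℝ} (hx : 0 ≤ x) (hy : 0 ≤ y) :
    negMulLog (x + y) ≤ negMulLog x + negMulLog y := by
  have hx' := mul_log_le_mul_log_of_le hx (le_add_of_nonneg_right hy)
  have hy' := mul_log_le_mul_log_of_le hy (le_add_of_nonneg_left hx)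
  simp only [negMulLog, neg_mul]
  linarith [add_mul x y (log (x + y))]

lemma negMulLog_sub_le_negMulLog_add {x y : ℝ} (hx : 0 ≤ x) (hy : 0 ≤ y) (hxy : x + y ≤ 1) :
    negMulLog x - y ≤ negMulLog (x + y) := by
  rcases hx.eq_or_lt with rfl | hx
  · have := negMulLog_nonneg hy (by linarith)
    simp only [negMulLog_zero, zero_add]
    linarith
  have hratio : x * (log (x + y) - log x) ≤ y := by
    have h := log_le_sub_one_of_pos (div_pos (add_pos_of_pos_of_nonneg hx hy) hx)
    rw [log_div (by linarith) hx.ne'] at h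
    calc x * (log (x + y) - log x) ≤ x * ((x + y) / x - 1) := mul_le_mul_of_nonneg_left h hx.le
      _ = y := by field_simp; ring
  have hlog : y * log (x + y) ≤ 0 :=
    mul_nonpos_of_nonneg_of_nonpos hy (log_nonpos (by linarith) hxy)
  simp only [negMulLog, neg_mul]
  linarith [add_mul x y (log (x + y))]

lemma monotoneOn_negMulLog : MonotoneOn negMulLog (Set.Icc 0 (exp (-1))) := by
  refine monotoneOn_of_deriv_nonneg (convex_Icc _ _) continuous_negMulLog.continuousOn
    (differentiableOn_negMulLog.mono ?_) fun x hx ↦ ?_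
  · rw [interior_Icc]
    exact fun x hx ↦ hx.1.ne'
  · rw [interior_Icc] at hx
    rw [deriv_negMulLog hx.1.ne']
    linarith [(log_lt_iff_lt_exp hx.1).2 hx.2]

lemma le_negMulLog_of_le {x y : ℝ} (hxy : x ≤ y) (hy0 : 0 ≤ y) (hy : y ≤ exp (-1)) :
    x ≤ negMulLog y := by
  rcases hy0.eq_or_lt with rfl | hy0
  · simpa using hxy
  have : log y ≤ -1 := (log_le_iff_le_exp hy0).2 hy
  rw [negMulLog]
  nlinarith

end Real

section Entropy

variable {α : Type*} [Fintype α]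

lemma sum_negMulLog_le (d : α → ℝ) (hd : ∀ a, 0 ≤ d a) :
    ∑ a, negMulLog (d a) ≤ negMulLog (∑ a, d a) + (∑ a, d a) * log (Fintype.card α) := by
  rcases isEmpty_or_nonempty α with hα | hα
  · simp
  set c : ℝ := (Fintype.card α : ℝ)
  have hc : 0 < c := Nat.cast_pos.2 Fintype.card_pos
  have jensen := concaveOn_negMulLog.le_map_sum (t := univ) (w := fun _ ↦ c⁻¹) (p := d)
    (fun _ _ ↦ inv_nonneg.2 hc.le) (by simp [c, hc.ne']) (fun a _ ↦ Set.mem_Ici.2 (hd a))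
  simp only [smul_eq_mul, ← mul_sum, negMulLog_mul] at jensen
  have hcinv : c * negMulLog c⁻¹ = log c := by
    rw [negMulLog, log_inv]; field_simp
  calc ∑ a, negMulLog (d a) = c * (c⁻¹ * ∑ a, negMulLog (d a)) := by field_simp
    _ ≤ c * ((∑ a, d a) * negMulLog c⁻¹ + c⁻¹ * negMulLog (∑ a, d a)) :=
        mul_le_mul_of_nonneg_left jensen hc.le
    _ = _ := by rw [← hcinv]; field_simp; ring

lemma H2_eq_sum_negMulLog_div (P : α → ℝ) : H2 P = (∑ a, negMulLog (P a)) / log 2 := by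
  simp only [H2, negMulLog, logb, sum_div, ← sum_neg_distrib]
  congr 1 with a
  ring

end Entropy

section TotalVariation

variable {α ι : Type*} [Fintype α] [Fintype ι]

noncomputable def tvDist (P Q : α → ℝ) : ℝ := (1 / 2) * ∑ a, |P a - Q a|

lemma tvDist_nonneg (P Q : α → ℝ) : 0 ≤ tvDist P Q := by
  unfold tvDist
  positivity

lemma tvDist_comm (P Q : α → ℝ) : tvDist P Q = tvDist Q P := by
  simp only [tvDist, abs_sub_comm]

lemma sum_sub_min_eq_tvDist {P Q : α → ℝ} (hPQ : ∑ a, P a = ∑ a, Q a) :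
    ∑ a, (P a - min (P a) (Q a)) = tvDist P Q := by
  have habs : ∀ a, |P a - Q a| = (P a - min (P a) (Q a)) + (Q a - min (P a) (Q a)) := fun a ↦ by
    rcases le_total (P a) (Q a) with h | h
    · rw [abs_of_nonpos (sub_nonpos.2 h), min_eq_left h]; ring
    · rw [abs_of_nonneg (sub_nonneg.2 h), min_eq_right h]; ring
  have hdiff : ∑ a, (P a - min (P a) (Q a)) = ∑ a, (Q a - min (P a) (Q a)) := by
    simp only [sum_sub_distrib, hPQ]
  rw [tvDist, sum_congr rfl fun a _ ↦ habs a, sum_add_distrib, ← hdiff]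
  ring

lemma tvDist_mixture_le {w : ι → ℝ} {P : ι → α → ℝ} {Q : α → ℝ} {ε : ℝ}
    (hw0 : ∀ t, 0 ≤ w t) (hw1 : ∑ t, w t = 1) (hP : ∀ t, tvDist (P t) Q ≤ ε) :
    tvDist (fun a ↦ ∑ t, w t * P t a) Q ≤ ε := by
  have hpoint : ∀ a, |∑ t, w t * P t a - Q a| ≤ ∑ t, w t * |P t a - Q a| := fun a ↦ by
    have : ∑ t, w t * P t a - Q a = ∑ t, w t * (P t a - Q a) := by
      simp only [mul_sub, sum_sub_distrib, ← sum_mul, hw1, one_mul]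
    rw [this]
    refine (abs_sum_le_sum_abs _ _).trans_eq (sum_congr rfl fun t _ ↦ ?_)
    rw [abs_mul, abs_of_nonneg (hw0 t)]
  calc tvDist (fun a ↦ ∑ t, w t * P t a) Q
      ≤ (1 / 2) * ∑ a, ∑ t, w t * |P t a - Q a| := by
        unfold tvDist
        gcongr with a
        exact hpoint a
    _ = ∑ t, w t * tvDist (P t) Q := by
        simp only [tvDist, sum_comm (γ := ι), mul_sum]
        refine sum_congr rfl fun t _ ↦ sum_congr rfl fun a _ ↦ ?_
        ring
    _ ≤ ∑ t, w t * ε := sum_le_sum fun t _ ↦ mul_le_mul_of_nonneg_left (hP t) (hw0 t)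
    _ = ε := by rw [← sum_mul, hw1, one_mul]

end TotalVariation

section Pushforward

variable {α β ι : Type*} [Fintype β] [DecidableEq α]

noncomputable def pushforward (f : β → α) (p : β → ℝ) (a : α) : ℝ :=
  ∑ x, if f x = a then p x else 0

lemma pushforward_nonneg (f : β → α) {p : β → ℝ} (hp : ∀ x, 0 ≤ p x) (a : α) :
    0 ≤ pushforward f p a :=
  sum_nonneg fun x _ ↦ by split_ifs <;> simp [hp x]

lemma sum_pushforward [Fintype α] (f : β → α) (p : β → ℝ) :
    ∑ a, pushforward f p a = ∑ x, p x := by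
  simp only [pushforward]
  rw [sum_comm]
  simp

lemma tvDist_pushforward_le [Fintype α] (f : β → α) (p q : β → ℝ) :
    tvDist (pushforward f p) (pushforward f q) ≤ tvDist p q := by
  have hpoint : ∀ a, |pushforward f p a - pushforward f q a|
      ≤ pushforward f (fun x ↦ |p x - q x|) a := fun a ↦ by
    simp only [pushforward, ← sum_sub_distrib]
    refine (abs_sum_le_sum_abs _ _).trans_eq (sum_congr rfl fun x _ ↦ ?_)
    split_ifs <;> simp
  unfold tvDist
  gcongr
  exact (sum_le_sum fun a _ ↦ hpoint a).trans_eq (sum_pushforward _ _)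

lemma pushforward_eval_prod [Fintype α] [Fintype ι] [DecidableEq ι] {γ : α → ℝ}
    (hγ : ∑ a, γ a = 1) (t : ι) :
    pushforward (fun x : ι → α ↦ x t) (fun x ↦ ∏ s, γ (x s)) = γ := by
  ext a
  -- the indicator of `x t = a` is absorbed into the `t`-th factor of the product
  set g : ι → α → ℝ := fun s w ↦ if s = t then (if w = a then γ w else 0) else γ w
  have hfactor : ∀ x : ι → α,
      (if x t = a then ∏ s, γ (x s) else 0) = ∏ s, g s (x s) := fun x ↦ by
    by_cases hx : x t = a
    · rw [if_pos hx]
      refine prod_congr rfl fun s _ ↦ ?_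
      by_cases hs : s = t
      · subst hs; simp [g, hx]
      · simp [g, hs]
    · rw [if_neg hx]
      exact (prod_eq_zero (mem_univ t) (by simp [g, hx])).symm
  have hrow : ∀ s, ∑ w, g s w = if s = t then γ a else 1 := fun s ↦ by
    by_cases hs : s = t <;> simp [g, hs, hγ]
  rw [pushforward, sum_congr rfl fun x _ ↦ hfactor x, ← Fintype.prod_sum,
    prod_congr rfl fun s _ ↦ hrow s, prod_ite_eq' univ t]
  simp

end Pushforward

section EntropyContinuity

variable {α ι : Type*} [Fintype α] [Fintype ι]

lemma sum_negMulLog_sub_sum_negMulLog_le {P Q : α → ℝ} (hP0 : ∀ a, 0 ≤ P a)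
    (hP1 : ∑ a, P a = 1) (hQ0 : ∀ a, 0 ≤ Q a) (hQ1 : ∑ a, Q a = 1) :
    ∑ a, negMulLog (P a) - ∑ a, negMulLog (Q a)
      ≤ negMulLog (tvDist P Q) + tvDist P Q * (log (Fintype.card α) + 1) := by
  -- split `P` and `Q` along their common part `m = min P Q`; both excesses have mass `tvDist P Q`
  set m : α → ℝ := fun a ↦ min (P a) (Q a)
  have hm0 : ∀ a, 0 ≤ m a := fun a ↦ le_min (hP0 a) (hQ0 a)
  have hd0 : ∀ a, 0 ≤ P a - m a := fun a ↦ sub_nonneg.2 (min_le_left _ _)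
  have he0 : ∀ a, 0 ≤ Q a - m a := fun a ↦ sub_nonneg.2 (min_le_right _ _)
  have hd : ∑ a, (P a - m a) = tvDist P Q := sum_sub_min_eq_tvDist (hP1.trans hQ1.symm)
  have he : ∑ a, (Q a - m a) = tvDist P Q := by
    simp only [m, min_comm (P _)]
    rw [tvDist_comm]
    exact sum_sub_min_eq_tvDist (hQ1.trans hP1.symm)
  have hP : ∑ a, negMulLog (P a) ≤ ∑ a, negMulLog (m a) + ∑ a, negMulLog (P a - m a) := by
    rw [← sum_add_distrib]
    refine sum_le_sum fun a _ ↦ ?_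
    simpa using negMulLog_add_le (hm0 a) (hd0 a)
  have hQ : ∑ a, negMulLog (m a) - tvDist P Q ≤ ∑ a, negMulLog (Q a) := by
    rw [← he, ← sum_sub_distrib]
    refine sum_le_sum fun a _ ↦ ?_
    have hQle : Q a ≤ 1 := hQ1 ▸ single_le_sum (fun b _ ↦ hQ0 b) (mem_univ a)
    simpa using negMulLog_sub_le_negMulLog_add (hm0 a) (he0 a) (by simpa using hQle)
  have hd' := sum_negMulLog_le _ hd0
  rw [hd] at hd'
  linarith

lemma H2_sub_H2_le_of_tvDist_le {P Q : α → ℝ} (hP0 : ∀ a, 0 ≤ P a) (hP1 : ∑ a, P a = 1)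
    (hQ0 : ∀ a, 0 ≤ Q a) (hQ1 : ∑ a, Q a = 1) {ε : ℝ} (hε : ε ≤ exp (-1))
    (htv : tvDist P Q ≤ ε) :
    H2 P - H2 Q ≤ ε * logb 2 (Fintype.card α) + 2 * ε * logb 2 (1 / ε) := by
  have hδ0 := tvDist_nonneg P Q
  have hε0 : 0 ≤ ε := hδ0.trans htv
  have hmono : negMulLog (tvDist P Q) ≤ negMulLog ε :=
    monotoneOn_negMulLog ⟨hδ0, htv.trans hε⟩ ⟨hε0, hε⟩ htv
  have hlin : tvDist P Q ≤ negMulLog ε := le_negMulLog_of_le htv hε0 hε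
  have hcard : tvDist P Q * log (Fintype.card α) ≤ ε * log (Fintype.card α) :=
    mul_le_mul_of_nonneg_right htv (log_natCast_nonneg _)
  have hnats := sum_negMulLog_sub_sum_negMulLog_le hP0 hP1 hQ0 hQ1
  have hneg : negMulLog ε = ε * log (1 / ε) := by rw [negMulLog, one_div, log_inv]; ring
  rw [H2_eq_sum_negMulLog_div, H2_eq_sum_negMulLog_div, logb, logb, ← sub_div,
    div_le_iff₀ (log_pos one_lt_two)]
  calc _ ≤ ε * log (Fintype.card α) + 2 * negMulLog ε := by linarith
    _ = _ := by rw [hneg]; field_simp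

lemma H2_joint_eq (w : ι → ℝ) (P : ι → α → ℝ) (hP1 : ∀ t, ∑ a, P t a = 1) :
    H2 (fun z : α × ι ↦ w z.2 * P z.2 z.1) = H2 w + ∑ t, w t * H2 (P t) := by
  simp only [H2_eq_sum_negMulLog_div, Fintype.sum_prod_type, negMulLog_mul, mul_div_assoc',
    ← add_div, ← sum_div]
  rw [sum_comm]
  simp only [sum_add_distrib, ← sum_mul, ← mul_sum, hP1, one_mul]

lemma mutualInfo_le_of_tvDist_le {w : ι → ℝ} {P : ι → α → ℝ} {γ : α → ℝ}
    (hw0 : ∀ t, 0 ≤ w t) (hw1 : ∑ t, w t = 1)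
    (hP0 : ∀ t a, 0 ≤ P t a) (hP1 : ∀ t, ∑ a, P t a = 1)
    (hγ0 : ∀ a, 0 ≤ γ a) (hγ1 : ∑ a, γ a = 1) {ε : ℝ} (hε : ε ≤ exp (-1))
    (hP : ∀ t, tvDist (P t) γ ≤ ε) :
    H2 (fun a ↦ ∑ t, w t * P t a) + H2 w - H2 (fun z : α × ι ↦ w z.2 * P z.2 z.1)
      ≤ 2 * (ε * logb 2 (Fintype.card α) + 2 * ε * logb 2 (1 / ε)) := by
  set Pbar : α → ℝ := fun a ↦ ∑ t, w t * P t a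
  have hbar0 : ∀ a, 0 ≤ Pbar a := fun a ↦ sum_nonneg fun t _ ↦ mul_nonneg (hw0 t) (hP0 t a)
  have hbar1 : ∑ a, Pbar a = 1 := by
    simp only [Pbar]
    rw [sum_comm]
    simp only [← mul_sum, hP1, mul_one, hw1]
  have hgap : ∀ t, H2 Pbar - H2 (P t)
      ≤ 2 * (ε * logb 2 (Fintype.card α) + 2 * ε * logb 2 (1 / ε)) := fun t ↦ by
    have h₁ := H2_sub_H2_le_of_tvDist_le hbar0 hbar1 hγ0 hγ1 hε (tvDist_mixture_le hw0 hw1 hP)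
    have h₂ := H2_sub_H2_le_of_tvDist_le hγ0 hγ1 (hP0 t) (hP1 t) hε
      ((tvDist_comm _ _).trans_le (hP t))
    linarith
  rw [H2_joint_eq w P hP1]
  calc H2 Pbar + H2 w - (H2 w + ∑ t, w t * H2 (P t)) = ∑ t, w t * (H2 Pbar - H2 (P t)) := by
        simp only [mul_sub, sum_sub_distrib, ← sum_mul, hw1]
        ring
    _ ≤ ∑ t, w t * (2 * (ε * logb 2 (Fintype.card α) + 2 * ε * logb 2 (1 / ε))) :=
        sum_le_sum fun t _ ↦ mul_le_mul_of_nonneg_left (hgap t) (hw0 t)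
    _ = _ := by rw [← sum_mul, hw1, one_mul]

end EntropyContinuity

/-- If a sequence distribution is ε-close (TV, ε < 1/4) to an i.i.d. product
distribution, and T ∈ {1,…,n} is a random time index independent of W^n, then
I(W_T ; T) ≤ 4ε (log|W| + log(1/ε)) bits. -/
theorem sampled_time_info_of_near_iid {W : Type*} [Fintype W] [DecidableEq W] (n : ℕ)
    (p : (Fin n → W) → ℝ) (γ : W → ℝ) (pT : Fin n → ℝ)
    (hp0 : ∀ x, 0 ≤ p x) (hp1 : ∑ x, p x = 1)
    (hγ0 : ∀ w, 0 ≤ γ w) (hγ1 : ∑ w, γ w = 1)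
    (hT0 : ∀ t, 0 ≤ pT t) (hT1 : ∑ t, pT t = 1)
    (ε : ℝ) (hε : ε < 1/4)
    (htv : (1/2) * ∑ x, |p x - ∏ t, γ (x t)| ≤ ε) :
    H2 (fun a : W => ∑ t, pT t * ∑ x, if x t = a then p x else 0)
      + H2 pT
      - H2 (fun z : W × Fin n => pT z.2 * ∑ x, if x z.2 = z.1 then p x else 0)
      ≤ 4 * ε * (Real.logb 2 (Fintype.card W) + Real.logb 2 (1/ε)) := by
  have hε0 : 0 ≤ ε := (tvDist_nonneg _ _).trans htv
  have hε' : ε ≤ exp (-1) := by linarith [exp_neg_one_gt_d9]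
  have hmarg : ∀ t, tvDist (pushforward (· t) p) γ ≤ ε := fun t ↦ by
    rw [← pushforward_eval_prod hγ1 t]
    exact (tvDist_pushforward_le _ _ _).trans htv
  have hinfo := mutualInfo_le_of_tvDist_le hT0 hT1 (fun t ↦ pushforward_nonneg _ hp0)
    (fun t ↦ (sum_pushforward _ p).trans hp1) hγ0 hγ1 hε' hmarg
  have hL : 0 ≤ ε * logb 2 (Fintype.card W) :=
    mul_nonneg hε0 (div_nonneg (log_natCast_nonneg _) (log_nonneg one_le_two))
  simp only [pushforward] at hinfo
  linarith
end

section
/- (Cardinality bound via Carathéodory) For any discrete random variables (X, Y, W) with finite alphabets forming a Markov chain X − W − Y, there exists a joint distribution on (X, Y, U) forming a Markov chain X − U − Y with |U| ≤ |X||Y| + 1, having the same marginal on (X,Y), and satisfying I(X;U) = I(X;W) and I(X,Y;U) = I(X,Y;W). -/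
/-
Conditionally on `W = w` the chain is a product law, `p(x, y, w) = P(w) a_w(x) b_w(y)`, and
`I(X;W) = H(X) - ∑_w P(w) H(a_w)`, `I(X,Y;W) = H(X,Y) - ∑_w P(w) (H(a_w) + H(b_w))`. So all that
has to be preserved is the average of `(a_w ⊗ b_w, H(a_w), H(b_w))` under `P`, a point in the
convex hull of the image of the connected set `Δ_X × Δ_Y`. This image lies in the hyperplane
`∑_{x,y} v(x,y) = 1` of a space of dimension `|X||Y| + 2`, where Carathéodory's theorem gives
`|X||Y| + 2` points and the Fenchel–Eggleston refinement for connected sets `|X||Y| + 1`: if `x`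
is a positive combination of affinely independent points `z_i` spanning the hyperplane, move
`z_{i₀}` through the connected set until, by the intermediate value theorem, another barycentric
weight of `x` drops to zero. The weights and pairs `(a_u, b_u)` so obtained define `U`.
-/

open Finset Real

lemma AffineIndependent.linearIndependent_of_map_eq_one {k V ι : Type*} [Ring k]
    [AddCommGroup V] [Module k V] {z : ι → V} (hz : AffineIndependent k z) (ℓ : V →ₗ[k] k)
    (hℓ : ∀ i, ℓ (z i) = 1) : LinearIndependent k z := by
  refine linearIndependent_iff'.2 fun s g hg => affineIndependent_iff.1 hz s g ?_ hg
  simpa [hℓ] using congrArg ℓ hg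

section ConvexRepresentation

variable {E : Type*} [AddCommGroup E] [Module ℝ E] {S : Set E} {x : E}

def ConvexRepresentable (ι : Type*) [Fintype ι] (S : Set E) (x : E) : Prop :=
  ∃ (μ : ι → ℝ) (z : ι → E), (∀ i, 0 ≤ μ i) ∧ ∑ i, μ i = 1 ∧ (∀ i, z i ∈ S) ∧
    ∑ i, μ i • z i = x

lemma ConvexRepresentable.of_injective {ι κ : Type*} [Fintype ι] [Fintype κ]
    (h : ConvexRepresentable ι S x) {e : ι → κ} (he : e.Injective) :
    ConvexRepresentable κ S x := by
  obtain ⟨μ, z, hμ0, hμ1, hz, rfl⟩ := h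
  obtain ⟨i₁⟩ : Nonempty ι := by
    by_contra! h
    simp at hμ1
  set μ' := Function.extend e μ 0
  set z' := Function.extend e z fun _ => z i₁
  have hμ'_off (k : κ) (hk : k ∉ Set.range e) : μ' k = 0 := by
    simp [μ', Function.extend_apply' _ _ _ hk]
  refine ⟨μ', z', fun k => ?_, ?_, fun k => ?_, ?_⟩
  · by_cases hk : k ∈ Set.range e
    · obtain ⟨i, rfl⟩ := hk
      simpa [μ', he.extend_apply] using hμ0 i
    · simp [hμ'_off k hk]
  · rw [← hμ1]
    exact (Fintype.sum_of_injective e he _ _ hμ'_off fun i => by simp [μ', he.extend_apply]).symm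
  · by_cases hk : k ∈ Set.range e
    · obtain ⟨i, rfl⟩ := hk
      simpa [z', he.extend_apply] using hz i
    · simpa [z', Function.extend_apply' _ _ _ hk] using hz i₁
  · exact (Fintype.sum_of_injective e he _ _ (fun k hk => by simp [hμ'_off k hk])
      fun i => by simp [μ', z', he.extend_apply]).symm

lemma convexRepresentable_subtype_ne_zero {ι : Type*} [Fintype ι] {μ : ι → ℝ} {z : ι → E}
    (hμ0 : ∀ i, 0 ≤ μ i) (hμ1 : ∑ i, μ i = 1) (hz : ∀ i, z i ∈ S) :
    ConvexRepresentable {i // μ i ≠ 0} S (∑ i, μ i • z i) := by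
  have hμ : ∀ i ∉ Set.range (Subtype.val : {i // μ i ≠ 0} → ι), μ i = 0 := by simp
  refine ⟨fun t => μ t, fun t => z t, fun t => hμ0 t, ?_, fun t => hz t, ?_⟩
  · rw [← hμ1]
    exact Fintype.sum_of_injective _ Subtype.val_injective _ _ hμ fun _ => rfl
  · exact Fintype.sum_of_injective _ Subtype.val_injective _ _
      (fun i hi => by simp [hμ i hi]) fun _ => rfl

lemma convexRepresentable_of_card_support_le {ι κ : Type*} [Fintype ι] [Fintype κ]
    {μ : ι → ℝ} {z : ι → E} (hμ0 : ∀ i, 0 ≤ μ i) (hμ1 : ∑ i, μ i = 1)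
    (hz : ∀ i, z i ∈ S) (hcard : #{i | μ i ≠ 0} ≤ Fintype.card κ) :
    ConvexRepresentable κ S (∑ i, μ i • z i) := by
  obtain ⟨e⟩ := Function.Embedding.nonempty_of_card_le
    (α := {i // μ i ≠ 0}) (β := κ) (by rwa [Fintype.card_subtype])
  exact (convexRepresentable_subtype_ne_zero hμ0 hμ1 hz).of_injective e.injective

lemma convexRepresentable_exchange {ι κ : Type*} [Fintype ι] [Fintype κ]
    (hcard : Fintype.card ι ≤ Fintype.card κ + 1) {z : ι → E} (hz : ∀ i, z i ∈ S)
    {w c : ι → ℝ} {i₀ j : ι} (hj : j ≠ i₀) (hw₀ : 0 < w i₀) (hw1 : ∑ i, w i = 1)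
    (hc1 : ∑ i, c i = 1) (hs : ∑ i, c i • z i ∈ S)
    (hf : ∀ i, 0 ≤ w i * c i₀ - w i₀ * c i) (hfj : w j * c i₀ - w i₀ * c j = 0) :
    ConvexRepresentable κ S (∑ i, w i • z i) := by
  classical
  set f : ι → ℝ := fun i => w i * c i₀ - w i₀ * c i
  have hf_sum : ∑ i, f i = c i₀ - w i₀ := by
    simp only [f, sum_sub_distrib, ← sum_mul, ← mul_sum, hw1, hc1]
    ring
  have hc₀ : 0 < c i₀ := by linarith [sum_nonneg fun i (_ : i ∈ univ) => hf i]
  -- `c i₀ • x = w i₀ • s + ∑ f i • z i`, where `s = ∑ c i • z i` replaces `z i₀`,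
  -- and both `f i₀` and `f j` vanish
  set ν : Option ι → ℝ := fun o => o.elim (w i₀ / c i₀) fun i => f i / c i₀
  set z' : Option ι → E := fun o => o.elim (∑ i, c i • z i) z
  have hν0 : ∀ o, 0 ≤ ν o := by
    rintro (_ | i)
    · exact div_nonneg hw₀.le hc₀.le
    · exact div_nonneg (hf i) hc₀.le
  have hν1 : ∑ o, ν o = 1 := by
    rw [Fintype.sum_option]
    simp only [ν, Option.elim, ← sum_div, hf_sum]
    field_simp
    ring
  have hx : ∑ o, ν o • z' o = ∑ i, w i • z i := by
    rw [Fintype.sum_option]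
    simp only [ν, z', Option.elim, smul_sum, smul_smul, ← sum_add_distrib, ← add_smul]
    refine sum_congr rfl fun i _ => congrArg (· • z i) ?_
    simp only [f]
    field_simp
    ring
  have hsupp : ({o | ν o ≠ 0} : Finset (Option ι)) ⊆ (univ.erase (some i₀)).erase (some j) := by
    intro o
    simp only [mem_filter, mem_univ, true_and, mem_erase]
    rintro hνo
    refine ⟨?_, ?_, trivial⟩ <;> rintro rfl <;> simp [ν, f, hfj] at hνo
  rw [← hx]
  refine convexRepresentable_of_card_support_le hν0 hν1 (by rintro (_ | i) <;> simp [z', hs, hz])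
    ((card_le_card hsupp).trans ?_)
  rw [card_erase_of_mem (by simp [hj]), card_erase_of_mem (mem_univ _), card_univ,
    Fintype.card_option]
  omega

end ConvexRepresentation

lemma IsPreconnected.exists_exchange_point {T ι : Type*} [TopologicalSpace T] [Fintype ι]
    [DecidableEq ι] {S : Set T} (hS : IsPreconnected S) {c : T → ι → ℝ}
    (hc : ∀ i, ContinuousOn (c · i) S)
    {w : ι → ℝ} (hw : ∀ i, 0 < w i) {i₀ i₁ : ι} (hi : i₁ ≠ i₀) {a b : T} (ha : a ∈ S)
    (hb : b ∈ S) (hca : c a = Pi.single i₀ 1) (hcb : c b = Pi.single i₁ 1) :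
    ∃ s ∈ S, ∃ j ≠ i₀, (∀ i, 0 ≤ w i * c s i₀ - w i₀ * c s i) ∧
      w j * c s i₀ - w i₀ * c s j = 0 := by
  have hne : (univ.erase i₀).Nonempty := ⟨i₁, mem_erase.2 ⟨hi, mem_univ _⟩⟩
  set g : T → ℝ := fun s => (univ.erase i₀).inf' hne fun i => w i * c s i₀ - w i₀ * c s i
  have hg : ContinuousOn g S := ContinuousOn.finset_inf'_apply hne fun i _ =>
    (continuousOn_const.mul (hc i₀)).sub (continuousOn_const.mul (hc i))
  have hga : 0 < g a := by
    refine (lt_inf'_iff hne).2 fun i hi => ?_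
    simp [hca, ne_of_mem_erase hi, hw i]
  have hgb : g b < 0 := by
    refine (inf'_le _ (mem_erase.2 ⟨hi, mem_univ _⟩)).trans_lt ?_
    simp [hcb, hi.symm, hw i₀]
  obtain ⟨s, hs, hgs⟩ := hS.intermediate_value hb ha hg ⟨hgb.le, hga.le⟩
  obtain ⟨j, hj, hgj⟩ := exists_mem_eq_inf' hne fun i => w i * c s i₀ - w i₀ * c s i
  refine ⟨s, hs, j, ne_of_mem_erase hj, fun i => ?_, hgj.symm.trans hgs⟩
  rcases eq_or_ne i i₀ with rfl | hi
  · simp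
  · exact hgs ▸ inf'_le _ (mem_erase.2 ⟨hi, mem_univ i⟩)

theorem IsPreconnected.convexRepresentable_of_mem_convexHull {E : Type*} [NormedAddCommGroup E]
    [NormedSpace ℝ E] [FiniteDimensional ℝ E] {S : Set E} (hS : IsPreconnected S)
    (ℓ : E →ₗ[ℝ] ℝ) (hℓ : ∀ s ∈ S, ℓ s = 1) {N : ℕ} (hN : N ≠ 0)
    (hE : Module.finrank ℝ E ≤ N + 1) {x : E} (hx : x ∈ convexHull ℝ S) :
    ConvexRepresentable (Fin N) S x := by
  classical
  obtain ⟨ι, _, z, w, hzS, hz, hw0, hw1, rfl⟩ := eq_pos_convex_span_of_mem_convexHull hx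
  have hzS' : ∀ i, z i ∈ S := fun i => hzS ⟨i, rfl⟩
  have hli : LinearIndependent ℝ z := hz.linearIndependent_of_map_eq_one ℓ fun i => hℓ _ (hzS' i)
  have hcard := hli.fintype_card_le_finrank
  rcases (hcard.trans hE).lt_or_eq with hlt | hcardN
  · refine convexRepresentable_of_card_support_le (fun i => (hw0 i).le) hw1 hzS' ?_
    exact (card_filter_le _ _).trans (by simpa [Nat.lt_succ_iff] using hlt)
  -- Now the `z i` form a basis; replacing `z i₀` by a suitable point `s ∈ S` makes the
  -- weight of some other `z j` vanish.
  have : Nonempty ι := Fintype.card_pos_iff.1 (by omega)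
  set B := basisOfLinearIndependentOfCardEqFinrank hli (by omega)
  have hB : ⇑B = z := coe_basisOfLinearIndependentOfCardEqFinrank hli _
  have hc1 : ∀ s ∈ S, ∑ i, B.equivFunL s i = 1 := fun s hs => by
    simpa [hB, hℓ _ (hzS' _), hℓ s hs] using congrArg ℓ (B.sum_equivFun s)
  obtain ⟨i₀, i₁, hi⟩ := Fintype.exists_pair_of_one_lt_card (α := ι) (by omega)
  have hcz (i : ι) : B.equivFunL (z i) = Pi.single i 1 := by
    ext k
    simp [← hB, Finsupp.single_apply, Pi.single_apply, eq_comm]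
  obtain ⟨s, hs, j, hj, hf, hfj⟩ := hS.exists_exchange_point (c := B.equivFunL)
    (fun i => ((continuous_apply i).comp B.equivFunL.continuous).continuousOn) hw0 hi.symm
    (hzS' i₀) (hzS' i₁) (hcz i₀) (hcz i₁)
  refine convexRepresentable_exchange (by simp [hcardN]) hzS' hj (hw0 i₀) hw1 (hc1 s hs) ?_ hf hfj
  simpa [← hB, B.sum_repr] using hs

lemma H2_eq_sum_negMulLog {α : Type*} [Fintype α] (P : α → ℝ) :
    H2 P = (∑ a, negMulLog (P a)) / log 2 := by
  simp only [H2, negMulLog, logb, sum_div, ← sum_neg_distrib]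
  exact sum_congr rfl fun _ _ => by ring

lemma continuous_H2 {α : Type*} [Fintype α] : Continuous (H2 : (α → ℝ) → ℝ) := by
  simp_rw [funext H2_eq_sum_negMulLog]
  fun_prop

lemma H2_chain_rule {U X : Type*} [Fintype U] [Fintype X] (μ : U → ℝ) (a : U → X → ℝ)
    (ha : ∀ u, ∑ x, a u x = 1) :
    H2 (fun s : X × U => μ s.2 * a s.2 s.1) = H2 μ + ∑ u, μ u * H2 (a u) := by
  have hu (u : U) :
      ∑ x, negMulLog (μ u * a u x) = negMulLog (μ u) + μ u * ∑ x, negMulLog (a u x) := by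
    simp only [negMulLog_mul, sum_add_distrib, ← sum_mul, ha, one_mul, mul_sum]
  simp only [H2_eq_sum_negMulLog, Fintype.sum_prod_type]
  rw [sum_comm, sum_congr rfl fun u _ => hu u, sum_add_distrib, add_div]
  simp only [sum_div, mul_div_assoc]

lemma H2_prod {X Y : Type*} [Fintype X] [Fintype Y] {a : X → ℝ} {b : Y → ℝ}
    (ha : ∑ x, a x = 1) (hb : ∑ y, b y = 1) :
    H2 (fun s : X × Y => a s.1 * b s.2) = H2 a + H2 b := by
  simpa [mul_comm, ← sum_mul, hb, add_comm] using H2_chain_rule b (fun _ => a) fun _ => ha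

lemma div_mem_stdSimplex {ι : Type*} [Fintype ι] {v : ι → ℝ} {t : ℝ} (hv : ∀ i, 0 ≤ v i)
    (ht : ∑ i, v i = t) (ht0 : t ≠ 0) : (fun i => v i / t) ∈ stdSimplex ℝ ι :=
  ⟨fun i => div_nonneg (hv i) (ht ▸ sum_nonneg fun j _ => hv j),
    by rw [← sum_div, ht, div_self ht0]⟩

lemma exists_stdSimplex_mul_of_markov {X Y : Type*} [Fintype X] [Fintype Y] [Nonempty X]
    [Nonempty Y] {r : X → Y → ℝ} (hr0 : ∀ x y, 0 ≤ r x y)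
    (hr : ∀ x y, (∑ x', ∑ y', r x' y') * r x y = (∑ y', r x y') * ∑ x', r x' y) :
    ∃ a ∈ stdSimplex ℝ X, ∃ b ∈ stdSimplex ℝ Y,
      ∀ x y, r x y = (∑ x', ∑ y', r x' y') * (a x * b y) := by
  classical
  set t := ∑ x', ∑ y', r x' y'
  rcases eq_or_ne t 0 with ht | ht
  · obtain ⟨x₀⟩ := ‹Nonempty X›
    obtain ⟨y₀⟩ := ‹Nonempty Y›
    refine ⟨_, single_mem_stdSimplex ℝ x₀, _, single_mem_stdSimplex ℝ y₀, fun x y => ?_⟩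
    have hrow := congrFun
      ((Fintype.sum_eq_zero_iff_of_nonneg fun x => sum_nonneg fun y _ => hr0 x y).1 ht) x
    rw [ht, zero_mul]
    exact congrFun ((Fintype.sum_eq_zero_iff_of_nonneg (hr0 x)).1 hrow) y
  · refine ⟨_, div_mem_stdSimplex (t := t) (fun x => sum_nonneg fun y _ => hr0 x y) rfl ht,
      _, div_mem_stdSimplex (t := t) (fun y => sum_nonneg fun x _ => hr0 x y) sum_comm ht,
      fun x y => ?_⟩
    simp only [div_mul_div_comm, ← hr x y]
    field_simp

section Mixture

variable {U X Y : Type*} {μ : U → ℝ} {a : U → X → ℝ} {b : U → Y → ℝ}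

def mixture (μ : U → ℝ) (a : U → X → ℝ) (b : U → Y → ℝ) : X → Y → U → ℝ :=
  fun x y u => μ u * (a u x * b u y)

lemma mixture_nonneg (hμ : ∀ u, 0 ≤ μ u) (ha : ∀ u x, 0 ≤ a u x) (hb : ∀ u y, 0 ≤ b u y)
    (x : X) (y : Y) (u : U) : 0 ≤ mixture μ a b x y u :=
  mul_nonneg (hμ u) (mul_nonneg (ha u x) (hb u y))

lemma sum_mixture_eq_mul_fst [Fintype Y] (hb : ∀ u, ∑ y, b u y = 1) (x : X) (u : U) :
    ∑ y, mixture μ a b x y u = μ u * a u x := by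
  simp [mixture, ← mul_sum, hb]

lemma sum_mixture_eq_mul_snd [Fintype X] (ha : ∀ u, ∑ x, a u x = 1) (y : Y) (u : U) :
    ∑ x, mixture μ a b x y u = μ u * b u y := by
  simp [mixture, mul_comm (a _ _), ← mul_sum, ha]

variable [Fintype X] [Fintype Y]

lemma sum_sum_mixture (ha : ∀ u, ∑ x, a u x = 1) (hb : ∀ u, ∑ y, b u y = 1) (u : U) :
    ∑ x, ∑ y, mixture μ a b x y u = μ u := by
  simp [sum_mixture_eq_mul_fst hb, ← mul_sum, ha]

lemma mixture_markov (ha : ∀ u, ∑ x, a u x = 1) (hb : ∀ u, ∑ y, b u y = 1) (x : X) (y : Y)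
    (u : U) : (∑ x', ∑ y', mixture μ a b x' y' u) * mixture μ a b x y u =
      (∑ y', mixture μ a b x y' u) * ∑ x', mixture μ a b x' y u := by
  rw [sum_sum_mixture ha hb, sum_mixture_eq_mul_fst hb, sum_mixture_eq_mul_snd ha, mixture]
  ring

lemma exists_eq_mixture_of_markov [Nonempty X] [Nonempty Y] {p : X → Y → U → ℝ}
    (hp0 : ∀ x y u, 0 ≤ p x y u)
    (hMarkov : ∀ x y u,
      (∑ x', ∑ y', p x' y' u) * p x y u = (∑ y', p x y' u) * (∑ x', p x' y u)) :
    ∃ (P : U → ℝ) (a : U → X → ℝ) (b : U → Y → ℝ), (∀ u, 0 ≤ P u) ∧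
      (∀ u, a u ∈ stdSimplex ℝ X) ∧ (∀ u, b u ∈ stdSimplex ℝ Y) ∧ p = mixture P a b := by
  choose a ha b hb hab using fun u =>
    exists_stdSimplex_mul_of_markov (fun x y => hp0 x y u) fun x y => hMarkov x y u
  exact ⟨_, a, b, fun u => sum_nonneg fun x _ => sum_nonneg fun y _ => hp0 x y u, ha, hb,
    funext₃ fun x y u => hab u x y⟩

variable [Fintype U]

lemma sum_sum_sum_mixture (ha : ∀ u, ∑ x, a u x = 1) (hb : ∀ u, ∑ y, b u y = 1) :
    ∑ x, ∑ y, ∑ u, mixture μ a b x y u = ∑ u, μ u := by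
  rw [← sum_congr rfl fun u _ => sum_sum_mixture ha hb u]
  exact (sum_congr rfl fun _ _ => sum_comm).trans sum_comm

variable (X Y) in
noncomputable def prodEntropyMap (d : (X → ℝ) × (Y → ℝ)) : (X → Y → ℝ) × ℝ × ℝ :=
  (fun x y => d.1 x * d.2 y, H2 d.1, H2 d.2)

noncomputable def mixtureMoment (μ : U → ℝ) (a : U → X → ℝ) (b : U → Y → ℝ) :
    (X → Y → ℝ) × ℝ × ℝ :=
  (fun x y => ∑ u, mixture μ a b x y u, ∑ u, μ u * H2 (a u), ∑ u, μ u * H2 (b u))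

lemma mixtureMoment_eq_sum :
    mixtureMoment μ a b = ∑ u, μ u • prodEntropyMap X Y (a u, b u) := by
  ext <;> simp [mixtureMoment, prodEntropyMap, mixture, Prod.fst_sum, Prod.snd_sum,
    Finset.sum_apply]

lemma mixture_mutualInfo_fst (ha : ∀ u, ∑ x, a u x = 1) (hb : ∀ u, ∑ y, b u y = 1) :
    H2 (fun x => ∑ y, ∑ u, mixture μ a b x y u) + H2 (fun u => ∑ x, ∑ y, mixture μ a b x y u)
      - H2 (fun s : X × U => ∑ y, mixture μ a b s.1 y s.2) =
    H2 (fun x => ∑ y, (mixtureMoment μ a b).1 x y) - (mixtureMoment μ a b).2.1 := by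
  simp only [sum_sum_mixture ha hb]
  simp only [sum_mixture_eq_mul_fst hb, H2_chain_rule μ a ha, mixtureMoment]
  ring

lemma mixture_mutualInfo_pair (ha : ∀ u, ∑ x, a u x = 1) (hb : ∀ u, ∑ y, b u y = 1) :
    H2 (fun s : X × Y => ∑ u, mixture μ a b s.1 s.2 u)
      + H2 (fun u => ∑ x, ∑ y, mixture μ a b x y u)
      - H2 (fun s : (X × Y) × U => mixture μ a b s.1.1 s.1.2 s.2) =
    H2 (fun s : X × Y => (mixtureMoment μ a b).1 s.1 s.2)
      - ((mixtureMoment μ a b).2.1 + (mixtureMoment μ a b).2.2) := by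
  have hab (u : U) : ∑ s : X × Y, a u s.1 * b u s.2 = 1 := by
    rw [Fintype.sum_prod_type, ← sum_mul_sum, ha, hb, one_mul]
  have hjoint : H2 (fun s : (X × Y) × U => mixture μ a b s.1.1 s.1.2 s.2) =
      H2 μ + ∑ u, μ u * H2 (fun s : X × Y => a u s.1 * b u s.2) :=
    H2_chain_rule μ (fun u (s : X × Y) => a u s.1 * b u s.2) hab
  simp only [H2_prod (ha _) (hb _), mul_add, sum_add_distrib] at hjoint
  simp only [sum_sum_mixture ha hb, hjoint, mixtureMoment]
  ring

end Mixture

section Caratheodory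

variable {X Y : Type*} [Fintype X] [Fintype Y]

lemma continuous_prodEntropyMap : Continuous (prodEntropyMap X Y) :=
  (continuous_pi fun x => continuous_pi fun y =>
      ((continuous_apply x).comp continuous_fst).mul ((continuous_apply y).comp continuous_snd)).prodMk
    ((continuous_H2.comp continuous_fst).prodMk (continuous_H2.comp continuous_snd))

lemma finrank_prodEntropySpace :
    Module.finrank ℝ ((X → Y → ℝ) × ℝ × ℝ) = Fintype.card X * Fintype.card Y + 2 := by
  simp [Module.finrank_prod, Module.finrank_pi_fintype]

lemma exists_fin_mixtureMoment_eq {W : Type*} [Fintype W] {P : W → ℝ} {a : W → X → ℝ}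
    {b : W → Y → ℝ} (hP0 : ∀ w, 0 ≤ P w) (hP1 : ∑ w, P w = 1)
    (ha : ∀ w, a w ∈ stdSimplex ℝ X) (hb : ∀ w, b w ∈ stdSimplex ℝ Y) :
    ∃ (μ : Fin (Fintype.card X * Fintype.card Y + 1) → ℝ) (a' : _ → X → ℝ) (b' : _ → Y → ℝ),
      (∀ u, 0 ≤ μ u) ∧ ∑ u, μ u = 1 ∧ (∀ u, a' u ∈ stdSimplex ℝ X) ∧
      (∀ u, b' u ∈ stdSimplex ℝ Y) ∧ mixtureMoment μ a' b' = mixtureMoment P a b := by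
  set S := prodEntropyMap X Y '' (stdSimplex ℝ X ×ˢ stdSimplex ℝ Y)
  have hS : IsPreconnected S :=
    ((convex_stdSimplex ℝ X).prod (convex_stdSimplex ℝ Y)).isPreconnected.image _
      continuous_prodEntropyMap.continuousOn
  let ℓ : ((X → Y → ℝ) × ℝ × ℝ) →ₗ[ℝ] ℝ :=
    ∑ x, ∑ y, (LinearMap.proj y ∘ₗ LinearMap.proj x) ∘ₗ LinearMap.fst ℝ _ _
  have hℓ : ∀ v ∈ S, ℓ v = 1 := by
    rintro _ ⟨d, ⟨hd₁, hd₂⟩, rfl⟩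
    simp [ℓ, prodEntropyMap, LinearMap.sum_apply, ← sum_mul_sum, hd₁.2, hd₂.2]
  have hx : mixtureMoment P a b ∈ convexHull ℝ S := by
    rw [mixtureMoment_eq_sum]
    exact mem_convexHull_of_exists_fintype P _ hP0 hP1
      (fun w => ⟨(a w, b w), ⟨ha w, hb w⟩, rfl⟩) rfl
  obtain ⟨μ, z, hμ0, hμ1, hz, hzx⟩ := hS.convexRepresentable_of_mem_convexHull ℓ hℓ
    (Nat.succ_ne_zero _) finrank_prodEntropySpace.le hx
  choose d hd hdz using hz
  refine ⟨μ, fun u => (d u).1, fun u => (d u).2, hμ0, hμ1, fun u => (hd u).1,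
    fun u => (hd u).2, ?_⟩
  rw [← hzx, mixtureMoment_eq_sum]
  simp only [Prod.mk.eta, hdz]

end Caratheodory

/-- Cardinality bound via Carathéodory: for any Markov chain X − W − Y on finite
alphabets, there is a joint distribution on (X,Y,U) with X − U − Y Markov, |U| ≤ |X||Y|+1, the
same (X,Y)-marginal, and the same values of I(X;U)=I(X;W) and I(X,Y;U)=I(X,Y;W). -/
theorem cardinality_bound {X Y W : Type*} [Fintype X] [Fintype Y] [Fintype W]
    (p : X → Y → W → ℝ)
    (hp0 : ∀ x y w, 0 ≤ p x y w)
    (hp1 : ∑ x, ∑ y, ∑ w, p x y w = 1)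
    (hMarkov : ∀ x y w,
      (∑ x', ∑ y', p x' y' w) * p x y w = (∑ y', p x y' w) * (∑ x', p x' y w)) :
    ∃ q : X → Y → Fin (Fintype.card X * Fintype.card Y + 1) → ℝ,
      (∀ x y u, 0 ≤ q x y u) ∧
      (∑ x, ∑ y, ∑ u, q x y u = 1) ∧
      (∀ x y u,
        (∑ x', ∑ y', q x' y' u) * q x y u = (∑ y', q x y' u) * (∑ x', q x' y u)) ∧
      (∀ x y, ∑ u, q x y u = ∑ w, p x y w) ∧
      (H2 (fun x => ∑ y, ∑ u, q x y u) + H2 (fun u => ∑ x, ∑ y, q x y u)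
          - H2 (fun s : X × Fin (Fintype.card X * Fintype.card Y + 1) => ∑ y, q s.1 y s.2)
        = H2 (fun x => ∑ y, ∑ w, p x y w) + H2 (fun w => ∑ x, ∑ y, p x y w)
          - H2 (fun s : X × W => ∑ y, p s.1 y s.2)) ∧
      (H2 (fun s : X × Y => ∑ u, q s.1 s.2 u) + H2 (fun u => ∑ x, ∑ y, q x y u)
          - H2 (fun s : (X × Y) × Fin (Fintype.card X * Fintype.card Y + 1) =>
              q s.1.1 s.1.2 s.2)
        = H2 (fun s : X × Y => ∑ w, p s.1 s.2 w) + H2 (fun w => ∑ x, ∑ y, p x y w)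
          - H2 (fun s : (X × Y) × W => p s.1.1 s.1.2 s.2)) := by
  have : Nonempty X := by
    by_contra!
    simp at hp1
  have : Nonempty Y := by
    by_contra!
    simp at hp1
  obtain ⟨P, a, b, hP0, ha, hb, rfl⟩ := exists_eq_mixture_of_markov hp0 hMarkov
  have ha1 : ∀ w, ∑ x, a w x = 1 := fun w => (ha w).2
  have hb1 : ∀ w, ∑ y, b w y = 1 := fun w => (hb w).2
  rw [sum_sum_sum_mixture ha1 hb1] at hp1
  obtain ⟨μ, a', b', hμ0, hμ1, ha', hb', hmoment⟩ := exists_fin_mixtureMoment_eq hP0 hp1 ha hb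
  have ha1' : ∀ u, ∑ x, a' u x = 1 := fun u => (ha' u).2
  have hb1' : ∀ u, ∑ y, b' u y = 1 := fun u => (hb' u).2
  refine ⟨mixture μ a' b', mixture_nonneg hμ0 (fun u => (ha' u).1) (fun u => (hb' u).1),
    by rwa [sum_sum_sum_mixture ha1' hb1'], mixture_markov ha1' hb1',
    congr_fun₂ (congrArg Prod.fst hmoment), ?_, ?_⟩
  · rw [mixture_mutualInfo_fst ha1' hb1', mixture_mutualInfo_fst ha1 hb1, hmoment]
  · rw [mixture_mutualInfo_pair ha1' hb1', mixture_mutualInfo_pair ha1 hb1, hmoment]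
end

section
/- If Π ≪ Γ and Γ is an i.i.d. discrete distribution of n variables on a finite alphabet, then the Kullback–Leibler divergence is bounded in terms of total variation: D(Π‖Γ) = O( (n + log(1/TV)) · TV ) as TV = ‖Π − Γ‖_TV → 0 and n → ∞; more precisely there is a constant C depending only on the single-letter alphabet and distribution such that D(Π‖Γ) ≤ C·(n + log(1/TV))·TV for TV small enough. -/
/-!
Write `p log (p/q) = (p - q) log (p/q) + q log (p/q)`. When `p > q`, the second term is at most
`p - q` since `log u ≤ u - 1`, and the first is at most `(p - q) log (1/q)` since `p ≤ 1`; when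
`p ≤ q` the whole term is nonpositive. So each atom contributes at most `(p - q)⁺ (1 + log (1/q))`.
For the i.i.d. measure `log (1/Γ(x)) ≤ n L` with `L` a bound on `log (1/γ)`, so `D(Π‖Γ)` is at
most `2 (1 + n L) TV`; the term `log (1/TV) ≥ 1` only has to absorb the constant.
-/

open Real Finset

lemma mul_log_div_le_posPart_mul {p q M : ℝ} (hp0 : 0 ≤ p) (hp1 : p ≤ 1) (hq : 0 < q)
    (hM : -log q ≤ M) : p * log (p / q) ≤ (p - q)⁺ * (1 + M) := by
  rcases le_or_gt p q with hpq | hqp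
  · rw [posPart_eq_zero.mpr (sub_nonpos.mpr hpq), zero_mul]
    exact mul_nonpos_of_nonneg_of_nonpos hp0
      (log_nonpos (div_nonneg hp0 hq.le) ((div_le_one hq).mpr hpq))
  · rw [posPart_eq_self.mpr (sub_nonneg.mpr hqp.le)]
    have hp : 0 < p := hq.trans hqp
    have hlog_le_M : log (p / q) ≤ M := by
      rw [log_div hp.ne' hq.ne']
      linarith [log_nonpos hp.le hp1]
    have hq_mul_log : q * log (p / q) ≤ p - q := by
      calc q * log (p / q) ≤ q * (p / q - 1) :=
            mul_le_mul_of_nonneg_left (log_le_sub_one_of_pos (div_pos hp hq)) hq.le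
        _ = p - q := by field_simp
    nlinarith [mul_le_mul_of_nonneg_left hlog_le_M (sub_nonneg.mpr hqp.le)]

lemma sum_mul_log_div_le_mul_sum_abs_sub {α : Type*} [Fintype α] {P Q : α → ℝ} {M : ℝ}
    (hP0 : ∀ x, 0 ≤ P x) (hP1 : ∑ x, P x = 1) (hQ : ∀ x, 0 < Q x)
    (hM : ∀ x, -log (Q x) ≤ M) (hM0 : 0 ≤ M) :
    ∑ x, P x * log (P x / Q x) ≤ (1 + M) * ∑ x, |P x - Q x| := by
  have hP_le_one (x : α) : P x ≤ 1 :=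
    hP1 ▸ single_le_sum (fun y _ => hP0 y) (mem_univ x)
  rw [mul_sum]
  refine sum_le_sum fun x _ => ?_
  calc P x * log (P x / Q x) ≤ (P x - Q x)⁺ * (1 + M) :=
        mul_log_div_le_posPart_mul (hP0 x) (hP_le_one x) (hQ x) (hM x)
    _ ≤ |P x - Q x| * (1 + M) :=
        mul_le_mul_of_nonneg_right (sup_le (le_abs_self _) (abs_nonneg _)) (by linarith)
    _ = (1 + M) * |P x - Q x| := mul_comm _ _

lemma neg_log_prod_le_card_mul {ι W : Type*} [Fintype ι] {γ : W → ℝ} (hγ0 : ∀ w, 0 < γ w)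
    {L : ℝ} (hL : ∀ w, -log (γ w) ≤ L) (x : ι → W) :
    -log (∏ t, γ (x t)) ≤ Fintype.card ι * L := by
  rw [log_prod fun t _ => (hγ0 (x t)).ne', ← sum_neg_distrib, ← nsmul_eq_mul, ← card_univ,
    ← sum_const]
  exact sum_le_sum fun t _ => hL (x t)

lemma one_le_logb_two_one_div {t : ℝ} (ht0 : 0 < t) (ht : t ≤ 1 / 2) : 1 ≤ logb 2 (1 / t) := by
  have h2 : (2 : ℝ) ≤ 1 / t := by simpa using one_div_le_one_div_of_le ht0 ht
  simpa using logb_le_logb_of_le (b := 2) (by norm_num) (by norm_num) h2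

theorem kl_bound_from_tv_general {W : Type*} [Fintype W]
    (γ : W → ℝ) (hγ0 : ∀ w, 0 < γ w) :
    ∃ C > (0:ℝ), ∃ δ > (0:ℝ), ∀ (n : ℕ) (P : (Fin n → W) → ℝ),
      (∀ x, 0 ≤ P x) → (∑ x, P x = 1) →
      ∀ tv : ℝ, tv = (1/2) * ∑ x, |P x - ∏ t, γ (x t)| → 0 < tv → tv ≤ δ →
        ∑ x, P x * Real.logb 2 (P x / ∏ t, γ (x t))
          ≤ C * ((n : ℝ) + Real.logb 2 (1 / tv)) * tv := by
  obtain ⟨L, hL0, hL⟩ : ∃ L : ℝ, 0 ≤ L ∧ ∀ w, -log (γ w) ≤ L :=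
    ⟨∑ w, |log (γ w)|, by positivity,
      fun w => (neg_le_abs _).trans
        (single_le_sum (f := fun w => |log (γ w)|) (fun w _ => abs_nonneg _) (mem_univ w))⟩
  have hlog2 : 0 < log 2 := log_pos (by norm_num)
  refine ⟨2 * (1 + L) / log 2, by positivity, 1 / 2, by norm_num, ?_⟩
  intro n P hP0 hP1 tv htv htv0 htvδ
  have hKL : ∑ x, P x * log (P x / ∏ t, γ (x t)) ≤ (1 + n * L) * (2 * tv) := by
    have hsum_abs : ∑ x, |P x - ∏ t, γ (x t)| = 2 * tv := by rw [htv]; ring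
    refine hsum_abs ▸ sum_mul_log_div_le_mul_sum_abs_sub hP0 hP1
      (fun x => prod_pos fun t _ => hγ0 (x t)) (fun x => ?_) (by positivity)
    simpa using neg_log_prod_le_card_mul hγ0 hL x
  have hA := one_le_logb_two_one_div htv0 htvδ
  have hconst : 1 + n * L ≤ (1 + L) * (n + logb 2 (1 / tv)) := by
    nlinarith [mul_nonneg hL0 (sub_nonneg.mpr hA)]
  calc ∑ x, P x * logb 2 (P x / ∏ t, γ (x t))
      = (∑ x, P x * log (P x / ∏ t, γ (x t))) / log 2 := by
        simp only [logb, ← mul_div_assoc, sum_div]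
    _ ≤ (1 + n * L) * (2 * tv) / log 2 := by gcongr
    _ ≤ (1 + L) * (n + logb 2 (1 / tv)) * (2 * tv) / log 2 := by gcongr
    _ = 2 * (1 + L) / log 2 * (n + logb 2 (1 / tv)) * tv := by ring

/-- For Γ an i.i.d. product of a full-support single-letter distribution γ on a
finite alphabet, there is a constant C (depending only on γ) such that for all n and all
distributions Π on W^n, if the total variation TV is small enough (and positive) then
D(Π‖Γ) ≤ C (n + log(1/TV)) TV. -/
theorem kl_bound_from_tv {W : Type*} [Fintype W] [Nonempty W]
    (γ : W → ℝ) (hγ0 : ∀ w, 0 < γ w) (hγ1 : ∑ w, γ w = 1) :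
    ∃ C > (0:ℝ), ∃ δ > (0:ℝ), ∀ (n : ℕ) (P : (Fin n → W) → ℝ),
      (∀ x, 0 ≤ P x) → (∑ x, P x = 1) →
      ∀ tv : ℝ, tv = (1/2) * ∑ x, |P x - ∏ t, γ (x t)| → 0 < tv → tv ≤ δ →
        ∑ x, P x * Real.logb 2 (P x / ∏ t, γ (x t))
          ≤ C * ((n : ℝ) + Real.logb 2 (1 / tv)) * tv :=
  kl_bound_from_tv_general γ hγ0
end

section
/- For the joint distribution (X,Y) uniform over all pairs in {1,…,m}² with X ≠ Y, and any random variable U such that X − U − Y forms a Markov chain, for each value u with P(U=u)>0, letting a_u = |supp(X|U=u)|, the supports of X and Y given U=u are disjoint, and H(X|U=u) ≤ log₂ a_u and H(X,Y|U=u) ≤ log₂ a_u + log₂(m − a_u). -/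
open Finset Real

theorem concaveOn_logb {b : ℝ} (hb : 1 ≤ b) : ConcaveOn ℝ (Set.Ioi 0) (logb b) := by
  have hlogb : logb b = fun x => (log b)⁻¹ • log x :=
    funext fun x => by rw [smul_eq_mul, inv_mul_eq_div, logb]
  rw [hlogb]
  exact strictConcaveOn_log_Ioi.concaveOn.smul (inv_nonneg.2 (log_nonneg hb))

theorem card_filter_pos_pos {α : Type*} [Fintype α] {w : α → ℝ} (h : 0 < ∑ a, w a) :
    0 < #{a | 0 < w a} := by
  obtain ⟨a, -, ha⟩ := exists_lt_of_sum_lt (show ∑ _a : α, (0 : ℝ) < ∑ a, w a by simpa using h)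
  exact card_pos.2 ⟨a, mem_filter.2 ⟨mem_univ a, ha⟩⟩

section Entropy

variable {α : Type*} [Fintype α]

theorem H2_le_logb_card_support (P : α → ℝ) (h0 : ∀ a, 0 ≤ P a) (h1 : ∑ a, P a = 1) :
    H2 P ≤ logb 2 #{a | 0 < P a} := by
  set A : Finset α := {a | 0 < P a}
  have hA : ∀ a ∈ A, 0 < P a := fun a ha => (mem_filter.1 ha).2
  have hsum_A : ∀ g : α → ℝ, (∀ a, g a ≠ 0 → 0 < P a) → ∑ a ∈ A, g a = ∑ a, g a :=
    fun g hg => sum_filter_of_ne fun a _ => hg a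
  calc H2 P = ∑ a ∈ A, P a • logb 2 (P a)⁻¹ := by
        rw [H2, ← hsum_A _ fun a h => (h0 a).lt_of_ne' (left_ne_zero_of_mul h), ← sum_neg_distrib]
        simp [logb_inv]
    _ ≤ logb 2 (∑ a ∈ A, P a • (P a)⁻¹) :=
        (concaveOn_logb one_le_two).le_map_sum (fun a ha => (hA a ha).le)
          ((hsum_A P fun a h => (h0 a).lt_of_ne' h).trans h1) fun a ha => inv_pos.2 (hA a ha)
    _ = logb 2 #A := by
        rw [sum_congr rfl fun a ha => by rw [smul_eq_mul, mul_inv_cancel₀ (hA a ha).ne']]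
        simp

theorem H2_div_sum_le_logb (w : α → ℝ) (hw : ∀ a, 0 ≤ w a) (hS : 0 < ∑ a, w a) {c : ℝ}
    (hc : (#{a | 0 < w a} : ℝ) ≤ c) :
    H2 (fun a => w a / ∑ b, w b) ≤ logb 2 c := by
  have hsupp : ({a | 0 < w a / ∑ b, w b} : Finset α) = ({a | 0 < w a} : Finset α) := by
    simp only [div_pos_iff_of_pos_right hS]
  calc H2 (fun a => w a / ∑ b, w b) ≤ logb 2 #{a | 0 < w a / ∑ b, w b} :=
        H2_le_logb_card_support _ (fun a => div_nonneg (hw a) hS.le)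
          (by rw [← sum_div, div_self hS.ne'])
    _ ≤ logb 2 c := by
        rw [hsupp]
        exact logb_le_logb_of_le one_lt_two (by exact_mod_cast card_filter_pos_pos hS) hc

end Entropy

section Slice

variable {α β : Type*} [Fintype α] [Fintype β]

theorem disjoint_rowSupport_colSupport_of_mul_eq {f : α → α → ℝ}
    (hprod : ∀ x y, (∑ x', ∑ y', f x' y') * f x y = (∑ y', f x y') * ∑ x', f x' y)
    (hdiag : ∀ x, f x x = 0) :
    Disjoint ({x | 0 < ∑ y, f x y} : Finset α) ({y | 0 < ∑ x, f x y} : Finset α) := by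
  refine disjoint_left.2 fun x hrow hcol => ?_
  have hzero := hprod x x
  rw [hdiag, mul_zero] at hzero
  exact (mul_pos (mem_filter.1 hrow).2 (mem_filter.1 hcol).2).ne' hzero.symm

theorem card_support_le_mul_card {f : α → β → ℝ} (hf : ∀ x y, 0 ≤ f x y) :
    #({s | 0 < f s.1 s.2} : Finset (α × β))
      ≤ #({x | 0 < ∑ y, f x y} : Finset α) * #({y | 0 < ∑ x, f x y} : Finset β) := by
  rw [← card_product]
  refine card_le_card fun s hs => ?_
  have hpos := (mem_filter.1 hs).2
  simp only [mem_product, mem_filter, mem_univ, true_and]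
  exact ⟨hpos.trans_le (single_le_sum (fun y _ => hf s.1 y) (mem_univ s.2)),
    hpos.trans_le (single_le_sum (fun x _ => hf x s.2) (mem_univ s.1))⟩

end Slice

open Classical in
theorem scatter_support_entropy_bounds_general (m : ℕ)
    {U : Type*} [Fintype U]
    (r : Fin m → Fin m → U → ℝ)
    (hr0 : ∀ x y u, 0 ≤ r x y u)
    (hmarg : ∀ x y, ∑ u, r x y u =
      if x ≠ y then 1 / ((m : ℝ) * ((m : ℝ) - 1)) else 0)
    (hMarkov : ∀ x y u, (∑ x', ∑ y', r x' y' u) * r x y u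
        = (∑ y', r x y' u) * (∑ x', r x' y u))
    (u : U) (hu : 0 < ∑ x, ∑ y, r x y u) :
    Disjoint (Finset.univ.filter (fun x => 0 < ∑ y, r x y u))
        (Finset.univ.filter (fun y => 0 < ∑ x, r x y u)) ∧
    H2 (fun x => (∑ y, r x y u) / ∑ x, ∑ y, r x y u)
      ≤ Real.logb 2 ((Finset.univ.filter (fun x => 0 < ∑ y, r x y u)).card) ∧
    H2 (fun s : Fin m × Fin m => r s.1 s.2 u / ∑ x, ∑ y, r x y u)
      ≤ Real.logb 2 ((Finset.univ.filter (fun x => 0 < ∑ y, r x y u)).card)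
        + Real.logb 2 ((m : ℝ)
            - ((Finset.univ.filter (fun x => 0 < ∑ y, r x y u)).card : ℝ)) := by
  have hdiag (x : Fin m) : r x x u = 0 :=
    (sum_eq_zero_iff_of_nonneg fun v _ => hr0 x x v).1 (by simpa using hmarg x x) u (mem_univ u)
  have hdisj := disjoint_rowSupport_colSupport_of_mul_eq (fun x y => hMarkov x y u) hdiag
  refine ⟨hdisj, H2_div_sum_le_logb _ (fun x => sum_nonneg fun y _ => hr0 x y u) hu le_rfl, ?_⟩
  set A : Finset (Fin m) := {x | 0 < ∑ y, r x y u}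
  set B : Finset (Fin m) := {y | 0 < ∑ x, r x y u}
  have hA : (0 : ℝ) < #A := by exact_mod_cast card_filter_pos_pos hu
  have hB : (0 : ℝ) < #B := by exact_mod_cast card_filter_pos_pos (by rwa [sum_comm])
  have hAB : (#A + #B : ℝ) ≤ m := by
    exact_mod_cast (card_union_of_disjoint hdisj).symm.trans_le (card_le_univ _) |>.trans_eq
      (Fintype.card_fin m)
  have hsupp : (#({s | 0 < r s.1 s.2 u} : Finset (Fin m × Fin m)) : ℝ) ≤ #A * (m - #A) :=
    calc _ ≤ (#A * #B : ℝ) := by exact_mod_cast card_support_le_mul_card fun x y => hr0 x y u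
      _ ≤ #A * (m - #A) := by gcongr; linarith
  have hjoint := H2_div_sum_le_logb (fun s : Fin m × Fin m => r s.1 s.2 u) (fun s => hr0 _ _ u)
    (by rwa [Fintype.sum_prod_type]) hsupp
  simp only [Fintype.sum_prod_type] at hjoint
  exact hjoint.trans_eq (logb_mul hA.ne' (by linarith))

open Classical in
/-- For (X,Y) uniform over pairs in {1,…,m}² with X ≠ Y and any U with
X − U − Y Markov, for each u with P(U=u) > 0 the conditional supports of X and Y are disjoint,
H(X|U=u) ≤ log₂ a_u and H(X,Y|U=u) ≤ log₂ a_u + log₂(m − a_u), where a_u is the size of the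
conditional support of X. -/
theorem scatter_support_entropy_bounds (m : ℕ) (hm : 2 ≤ m)
    {U : Type*} [Fintype U]
    (r : Fin m → Fin m → U → ℝ)
    (hr0 : ∀ x y u, 0 ≤ r x y u)
    (hr1 : ∑ x, ∑ y, ∑ u, r x y u = 1)
    (hmarg : ∀ x y, ∑ u, r x y u =
      if x ≠ y then 1 / ((m : ℝ) * ((m : ℝ) - 1)) else 0)
    (hMarkov : ∀ x y u, (∑ x', ∑ y', r x' y' u) * r x y u
        = (∑ y', r x y' u) * (∑ x', r x' y u))
    (u : U) (hu : 0 < ∑ x, ∑ y, r x y u) :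
    Disjoint (Finset.univ.filter (fun x => 0 < ∑ y, r x y u))
        (Finset.univ.filter (fun y => 0 < ∑ x, r x y u)) ∧
    H2 (fun x => (∑ y, r x y u) / ∑ x, ∑ y, r x y u)
      ≤ Real.logb 2 ((Finset.univ.filter (fun x => 0 < ∑ y, r x y u)).card) ∧
    H2 (fun s : Fin m × Fin m => r s.1 s.2 u / ∑ x, ∑ y, r x y u)
      ≤ Real.logb 2 ((Finset.univ.filter (fun x => 0 < ∑ y, r x y u)).card)
        + Real.logb 2 ((m : ℝ)
            - ((Finset.univ.filter (fun x => 0 < ∑ y, r x y u)).card : ℝ)) :=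
  scatter_support_entropy_bounds_general m r hr0 hmarg hMarkov u hu
end
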